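/- For t > 0, the integral of the complementary error function integral_{-infinity}^{-a/sqrt(2)} erfc(-((1+t)x + a t/sqrt(2)) / sqrt(t(t+1))) dx equals sqrt(t/(t+1)) * ( -(a/sqrt(2 t (t+1))) * erfc(a / sqrt(2 t (t+1))) + (1/sqrt(pi)) * exp(-a^2/(2 t (t+1))) ), for all a > 0. -/

import Mathlib

/-!
Substituting `u = -((1 + t) x + a t / √2) / √(t (t + 1))` turns the integral into
`√(t / (t + 1)) ∫_b^∞ erfc u du` with `b = a / √(2 t (t + 1))`. Since
`u erfc u - exp (-u²) / √π` has derivative `erfc u` and tends to `0` at infinity,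
`∫_b^∞ erfc = exp (-b²) / √π - b erfc b`.
-/

open MeasureTheory Real

/-- The complementary error function. -/
noncomputable def erfc (x : ℝ) : ℝ :=
  1 - (2 / Real.sqrt Real.pi) * ∫ u in (0 : ℝ)..x, Real.exp (-u ^ 2)

open Set Filter Topology

theorem integrable_exp_neg_sq : Integrable fun u : ℝ => exp (-u ^ 2) := by
  simpa using integrable_exp_neg_mul_sq one_pos

theorem erfc_eq_integral_Ioi (x : ℝ) : erfc x = 2 / √π * ∫ u in Ioi x, exp (-u ^ 2) := by
  have hsplit := intervalIntegral.integral_interval_add_Ioi (a := 0) (b := x)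
    integrable_exp_neg_sq.integrableOn integrable_exp_neg_sq.integrableOn
  have hhalf : ∫ u in Ioi (0 : ℝ), exp (-u ^ 2) = √π / 2 := by
    simpa using integral_gaussian_Ioi 1
  rw [erfc, eq_sub_of_add_eq (hsplit.trans hhalf)]
  field_simp
  ring

theorem erfc_nonneg (x : ℝ) : 0 ≤ erfc x := by
  rw [erfc_eq_integral_Ioi]
  have : 0 ≤ ∫ u in Ioi x, exp (-u ^ 2) :=
    setIntegral_nonneg measurableSet_Ioi fun u _ => (exp_pos _).le
  positivity

theorem erfc_le_exp_neg {x : ℝ} (hx : 1 ≤ x) : erfc x ≤ 2 / √π * exp (-x) := by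
  have hmono : ∫ u in Ioi x, exp (-u ^ 2) ≤ ∫ u in Ioi x, exp (-u) := by
    refine setIntegral_mono_on integrable_exp_neg_sq.integrableOn
      (by simpa using exp_neg_integrableOn_Ioi x one_pos) measurableSet_Ioi fun u hu => ?_
    have : u ≤ u ^ 2 := by nlinarith [hx.trans hu.le]
    exact exp_le_exp.2 (by linarith)
  rw [erfc_eq_integral_Ioi, ← integral_exp_neg_Ioi x]
  gcongr

theorem tendsto_mul_erfc_atTop : Tendsto (fun x : ℝ => x * erfc x) atTop (𝓝 0) := by
  have hbound : Tendsto (fun x : ℝ => 2 / √π * (x * exp (-x))) atTop (𝓝 0) := by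
    simpa using (tendsto_pow_mul_exp_neg_atTop_nhds_zero 1).const_mul (2 / √π)
  refine squeeze_zero' ?_ ?_ hbound
  · filter_upwards [eventually_ge_atTop (0 : ℝ)] with x hx
    exact mul_nonneg hx (erfc_nonneg x)
  · filter_upwards [eventually_ge_atTop (1 : ℝ)] with x hx
    calc x * erfc x ≤ x * (2 / √π * exp (-x)) := by gcongr; exact erfc_le_exp_neg hx
      _ = 2 / √π * (x * exp (-x)) := by ring

theorem hasDerivAt_erfc (x : ℝ) : HasDerivAt erfc (-(2 / √π * exp (-x ^ 2))) x := by
  have hcont : Continuous fun u : ℝ => exp (-u ^ 2) := by fun_prop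
  exact ((intervalIntegral.integral_hasDerivAt_right (hcont.intervalIntegrable _ _)
    (hcont.stronglyMeasurableAtFilter _ _) hcont.continuousAt).const_mul (2 / √π)).const_sub 1

theorem integral_Ioi_erfc (b : ℝ) : ∫ u in Ioi b, erfc u = exp (-b ^ 2) / √π - b * erfc b := by
  have hderiv : ∀ u ∈ Ici b,
      HasDerivAt (fun u => u * erfc u - exp (-u ^ 2) / √π) (erfc u) u := by
    intro u _
    refine (((hasDerivAt_id' u).mul (hasDerivAt_erfc u)).sub
      ((hasDerivAt_pow 2 u).neg.exp.div_const √π)).congr_deriv ?_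
    simp only [Pi.neg_apply, Nat.cast_ofNat]
    ring
  have hlim : Tendsto (fun u => u * erfc u - exp (-u ^ 2) / √π) atTop (𝓝 0) := by
    have hexp : Tendsto (fun u : ℝ => exp (-u ^ 2)) atTop (𝓝 0) :=
      tendsto_exp_neg_atTop_nhds_zero.comp (tendsto_pow_atTop two_ne_zero)
    simpa using tendsto_mul_erfc_atTop.sub (hexp.div_const √π)
  rw [integral_Ioi_of_hasDerivAt_of_nonneg' hderiv (fun u _ => erfc_nonneg u) hlim]
  ring

theorem integral_comp_mul_add_Iio_of_neg {E : Type*} [NormedAddCommGroup E] [NormedSpace ℝ E]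
    (g : ℝ → E) (c β : ℝ) {α : ℝ} (hα : α < 0) :
    ∫ x in Iio c, g (α * x + β) = |α|⁻¹ • ∫ u in Ioi (α * c + β), g u := by
  have hpre : (fun x => α * x + β) ⁻¹' Ioi (α * c + β) = Iio c := by
    ext x; simp [mul_lt_mul_left_of_neg hα]
  set G := (Ioi (α * c + β)).indicator g
  calc ∫ x in Iio c, g (α * x + β) = ∫ x, G (α * x + β) := by
        rw [← integral_indicator measurableSet_Iio, ← hpre]; rfl
    _ = |α⁻¹| • ∫ u, G (u + β) := Measure.integral_comp_mul_left (fun u => G (u + β)) α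
    _ = |α|⁻¹ • ∫ u in Ioi (α * c + β), g u := by
        rw [integral_add_right_eq_self, integral_indicator measurableSet_Ioi, abs_inv]

theorem erfc_integral_aux_general (a t : ℝ) (ht : 0 < t) :
    ∫ x in Set.Iio (-(a / Real.sqrt 2)),
        erfc (-((1 + t) * x + a * t / Real.sqrt 2) / Real.sqrt (t * (t + 1)))
      = Real.sqrt (t / (t + 1))
          * (-(a / Real.sqrt (2 * t * (t + 1))) * erfc (a / Real.sqrt (2 * t * (t + 1)))
            + (1 / Real.sqrt Real.pi) * Real.exp (-a ^ 2 / (2 * t * (t + 1)))) := by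
  set s := √(t * (t + 1))
  have hα : -((1 + t) / s) < 0 := neg_neg_of_pos (by positivity)
  have hsqrt : √(2 * t * (t + 1)) = √2 * s := by
    rw [mul_assoc, sqrt_mul zero_le_two]
  have harg : ∀ x, -((1 + t) * x + a * t / √2) / s = -((1 + t) / s) * x + -(a * t / √2) / s :=
    fun x => by ring
  have hlower : -((1 + t) / s) * -(a / √2) + -(a * t / √2) / s = a / √(2 * t * (t + 1)) := by
    rw [hsqrt]; field_simp; ring
  have hjac : |-((1 + t) / s)|⁻¹ = √(t / (t + 1)) := by
    rw [abs_neg, abs_of_pos (by positivity), inv_div,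
      show t / (t + 1) = t * (t + 1) / (1 + t) ^ 2 by field_simp; ring,
      sqrt_div' _ (by positivity), sqrt_sq (by positivity)]
  have hexp : -a ^ 2 / (2 * t * (t + 1)) = -(a / √(2 * t * (t + 1))) ^ 2 := by
    rw [div_pow, sq_sqrt (by positivity)]; ring
  simp_rw [harg]
  rw [integral_comp_mul_add_Iio_of_neg erfc _ _ hα, hlower, integral_Ioi_erfc, hjac, hexp,
    smul_eq_mul]
  ring

/-- An auxiliary erfc integral:
`∫_{-∞}^{-a/√2} erfc(-((1+t)x + at/√2)/√(t(t+1))) dx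
  = √(t/(t+1)) (-(a/√(2t(t+1))) erfc(a/√(2t(t+1))) + (1/√π) e^{-a²/(2t(t+1))})`. -/
theorem erfc_integral_aux (a t : ℝ) (ha : 0 < a) (ht : 0 < t) :
    ∫ x in Set.Iio (-(a / Real.sqrt 2)),
        erfc (-((1 + t) * x + a * t / Real.sqrt 2) / Real.sqrt (t * (t + 1)))
      = Real.sqrt (t / (t + 1))
          * (-(a / Real.sqrt (2 * t * (t + 1))) * erfc (a / Real.sqrt (2 * t * (t + 1)))
            + (1 / Real.sqrt Real.pi) * Real.exp (-a ^ 2 / (2 * t * (t + 1)))) :=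
  erfc_integral_aux_general a t ht
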